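/- Let A be a commutative ring, R a positive totally ordered aura with tempered growth, and |·| : A → R a power-multiplicative seminorm such that |2| > 1 (where 2 denotes the image of 2 ∈ ℤ in A). Then the restriction of |·| to the image of ℤ in A is multiplicative and is multiplicatively equivalent to the archimedean absolute value on ℤ: for all m, n ∈ ℤ (viewed in A via the canonical map), |m·n| = |m|·|n|, and |m| ≤ |n| if and only if the usual absolute value of m in ℤ is at most that of n. -/

import Mathlib

/-!
Write `‖n‖` for the seminorm of the image of `n : ℕ`. Expanding `r ≤ v ^ k` in base `v` gives
`‖r‖ ≤ (k v + 1) z ^ k` for any `z ≥ max 1 ‖v‖`. Applied to `w ^ (b n) ≤ u ^ (a n)` for all `n`,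
power-multiplicativity and tempered growth turn this into the Ostrowski-type comparison
`w ^ b ≤ u ^ a → ‖w‖ ^ b ≤ z ^ a`. With `‖2‖ > 1` it shows that `‖n‖ > 1` for `n ≥ 2` and that
`n ↦ ‖n‖` is monotone, so `‖x‖` lies between `‖2‖ ^ ⌊log₂ x⌋` and `‖2‖ ^ (⌊log₂ x⌋ + 1)`.
Hence `‖x‖ ‖y‖ ≤ 4 ‖x y‖`, and tempered growth applied to powers removes the `4`.
Strictness: if `u < v` then `2 u ^ k ≤ v ^ k` for some `k`, so `‖v‖ ≤ ‖u‖` would force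
`‖2‖ ‖u‖ ^ k ≤ ‖u‖ ^ k`.
-/

open Polynomial

def TemperedGrowth (R : Type*) [Semiring R] [LE R] : Prop :=
  ∀ P : ℕ[X], P ≠ 0 → ∀ x : R, (∀ n : ℕ, x ^ n ≤ ((P.eval n : ℕ) : R)) → x ≤ 1

structure IsPowMulSeminorm {A R : Type*} [Ring A] [Semiring R] [LE R] (f : A → R) : Prop where
  map_zero : f 0 = 0
  map_mul_le : ∀ a b, f (a * b) ≤ f a * f b
  map_add_le : ∀ a b, f (a + b) ≤ f a + f b
  map_pow : ∀ (a : A) (n : ℕ), f (a ^ n) = f a ^ n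

namespace IsPowMulSeminorm

variable {A R : Type*} [Ring A] [Semiring R] [LE R] {f : A → R}

theorem map_one (hf : IsPowMulSeminorm f) : f 1 = 1 := by simpa using hf.map_pow 0 0

theorem map_natCast_pow (hf : IsPowMulSeminorm f) (n k : ℕ) : f ((n ^ k : ℕ) : A) = f n ^ k := by
  rw [Nat.cast_pow, hf.map_pow]

end IsPowMulSeminorm

section OrderedSemiring

variable {A R : Type*} [Ring A] [CommSemiring R] [PartialOrder R] [IsOrderedRing R] {f : A → R}

namespace IsPowMulSeminorm

theorem map_natCast_le (hf : IsPowMulSeminorm f) (n : ℕ) : f n ≤ n := by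
  induction n with
  | zero => simp [hf.map_zero]
  | succ k ih =>
    push_cast
    exact (hf.map_add_le _ _).trans (by rw [hf.map_one]; gcongr)

theorem map_natCast_le_mul_pow (hf : IsPowMulSeminorm f) (hR : ∀ x : R, 0 ≤ x)
    {v : ℕ} (hv : 0 < v) {z : R} (hz : 1 ≤ z) (hvz : f v ≤ z) {k r : ℕ} (hr : r ≤ v ^ k) :
    f r ≤ ((k * v + 1 : ℕ) : R) * z ^ k := by
  induction k generalizing r with
  | zero => simpa using (hf.map_natCast_le r).trans (Nat.mono_cast (by simpa using hr : r ≤ 1))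
  | succ k ih =>
    have hq : r / v ^ k ≤ v := Nat.div_le_of_le_mul (by rwa [← pow_succ])
    have hs : r % v ^ k ≤ v ^ k := (Nat.mod_lt _ (pow_pos hv k)).le
    calc f r = f ((v ^ k * (r / v ^ k) + r % v ^ k : ℕ) : A) := by rw [Nat.div_add_mod]
      _ ≤ f v ^ k * f (r / v ^ k : ℕ) + f (r % v ^ k : ℕ) := by
        rw [Nat.cast_add, Nat.cast_mul, ← hf.map_natCast_pow]
        exact (hf.map_add_le _ _).trans (add_le_add_left (hf.map_mul_le _ _) _)
      _ ≤ z ^ k * v + ((k * v + 1 : ℕ) : R) * z ^ k :=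
        add_le_add (mul_le_mul (pow_le_pow_left₀ (hR _) hvz k)
          ((hf.map_natCast_le _).trans (Nat.mono_cast hq)) (hR _) (hR _)) (ih hs)
      _ = (((k + 1) * v + 1 : ℕ) : R) * z ^ k := by push_cast; ring
      _ ≤ (((k + 1) * v + 1 : ℕ) : R) * z ^ (k + 1) :=
        mul_le_mul_of_nonneg_left (pow_le_pow_right₀ hz k.le_succ) (Nat.cast_nonneg _)

end IsPowMulSeminorm

end OrderedSemiring

theorem Nat.exists_two_mul_pow_le_pow {u v : ℕ} (h : u < v) : ∃ k, 2 * u ^ k ≤ v ^ k := by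
  have hv : (0 : ℚ) < v := by exact_mod_cast (Nat.zero_le u).trans_lt h
  obtain ⟨k, hk⟩ := exists_pow_lt_of_lt_one (by norm_num : (0 : ℚ) < 1 / 2)
    ((div_lt_one hv).2 (by exact_mod_cast h : (u : ℚ) < v))
  rw [div_pow, div_lt_iff₀ (pow_pos hv k)] at hk
  exact ⟨k, by exact_mod_cast (by linarith : (2 : ℚ) * u ^ k ≤ v ^ k)⟩

section OrderedSemifield

variable {R : Type*} [Semifield R] [LinearOrder R]

theorem nonneg_of_forall_mul_le_mul (hmul : ∀ x y z t : R, x ≤ z → y ≤ t → x * y ≤ z * t)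
    (hpos : (0 : R) < 1) (x : R) : 0 ≤ x := by
  by_contra! hx
  have key : x * x⁻¹ ≤ 0 := by
    rcases le_total x⁻¹ 0 with h | h
    · simpa using hmul x x⁻¹ 0 0 hx.le h
    · simpa using hmul x x⁻¹ 0 x⁻¹ hx.le le_rfl
  rw [mul_inv_cancel₀ hx.ne] at key
  exact hpos.not_ge key

theorem IsOrderedRing.of_forall_mul_le_mul
    (hadd : ∀ x y z t : R, x ≤ z → y ≤ t → x + y ≤ z + t)
    (hmul : ∀ x y z t : R, x ≤ z → y ≤ t → x * y ≤ z * t) (hpos : (0 : R) < 1) :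
    IsOrderedRing R where
  add_le_add_left _ _ h _ := hadd _ _ _ _ h le_rfl
  zero_le_one := hpos.le
  mul_le_mul_of_nonneg_left _ _ _ _ h := hmul _ _ _ _ le_rfl h
  mul_le_mul_of_nonneg_right _ _ _ _ h := hmul _ _ _ _ h le_rfl

-- Multiplication by a nonzero element of a semifield is injective, so monotone is strictly monotone.
attribute [local instance] PosMulMono.toPosMulStrictMono MulPosMono.toMulPosStrictMono

variable [IsOrderedRing R]

theorem TemperedGrowth.le_of_pow_le_mul_pow (htemp : TemperedGrowth R) (hR : ∀ x : R, 0 ≤ x)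
    {P : ℕ[X]} (hP : P ≠ 0) {x y : R} (hy : y ≠ 0)
    (h : ∀ n : ℕ, x ^ n ≤ ((P.eval n : ℕ) : R) * y ^ n) : x ≤ y := by
  have hy' : 0 < y := (hR y).lt_of_ne' hy
  rw [← div_le_one₀ hy']
  refine htemp P hP _ fun n => ?_
  rw [div_pow, div_le_iff₀ (pow_pos hy' n)]
  exact h n

namespace IsPowMulSeminorm

variable {A : Type*} [Ring A] {f : A → R}

theorem map_natCast_pow_le_of_pow_le_pow (hf : IsPowMulSeminorm f) (hR : ∀ x : R, 0 ≤ x)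
    (htemp : TemperedGrowth R) {u w a b : ℕ} (hu : 0 < u) (h : w ^ b ≤ u ^ a) {z : R}
    (hz : 1 ≤ z) (huz : f u ≤ z) : f w ^ b ≤ z ^ a := by
  have hP : C (a * u) * X + 1 ≠ 0 := fun hP => by simpa using congrArg (eval 0) hP
  refine htemp.le_of_pow_le_mul_pow hR hP (pow_ne_zero _ (zero_lt_one.trans_le hz).ne') fun n => ?_
  have hpow : w ^ (b * n) ≤ u ^ (a * n) := by
    rw [pow_mul, pow_mul]
    exact Nat.pow_le_pow_left h n
  rw [← pow_mul, ← pow_mul, ← hf.map_natCast_pow]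
  convert hf.map_natCast_le_mul_pow hR hu hz huz hpow using 3
  simp only [eval_add, eval_mul, eval_C, eval_X, eval_one]
  ring

theorem one_lt_map_natCast (hf : IsPowMulSeminorm f) (hR : ∀ x : R, 0 ≤ x)
    (htemp : TemperedGrowth R) (h2 : 1 < f 2) {v : ℕ} (hv : 2 ≤ v) : 1 < f v := by
  by_contra! hv1
  have := hf.map_natCast_pow_le_of_pow_le_pow hR htemp (by omega) (a := 1) (b := 1)
    (by simpa using hv) le_rfl hv1
  simp only [pow_one, Nat.cast_ofNat] at this
  exact h2.not_ge this

theorem one_le_map_natCast (hf : IsPowMulSeminorm f) (hR : ∀ x : R, 0 ≤ x)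
    (htemp : TemperedGrowth R) (h2 : 1 < f 2) {v : ℕ} (hv : v ≠ 0) : 1 ≤ f v := by
  rcases (Nat.one_le_iff_ne_zero.2 hv).eq_or_lt with rfl | hv
  · simp [hf.map_one]
  · exact (hf.one_lt_map_natCast hR htemp h2 hv).le

theorem monotone_map_natCast (hf : IsPowMulSeminorm f) (hR : ∀ x : R, 0 ≤ x)
    (htemp : TemperedGrowth R) (h2 : 1 < f 2) : Monotone fun n : ℕ => f n := by
  intro u v huv
  rcases Nat.eq_zero_or_pos v with rfl | hv
  · rw [Nat.le_zero.1 huv]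
  · simpa using hf.map_natCast_pow_le_of_pow_le_pow hR htemp hv (a := 1) (b := 1)
      (by simpa using huv) (hf.one_le_map_natCast hR htemp h2 hv.ne') le_rfl

theorem map_natCast_mul_le_four_mul (hf : IsPowMulSeminorm f) (hR : ∀ x : R, 0 ≤ x)
    (htemp : TemperedGrowth R) (h2 : 1 < f 2) {x y : ℕ} (hx : x ≠ 0) (hy : y ≠ 0) :
    f x * f y ≤ 4 * f ((x * y : ℕ) : A) := by
  have hmono := hf.monotone_map_natCast hR htemp h2
  set s := Nat.log 2 x
  set t := Nat.log 2 y
  have hxy : 2 ^ (s + t) ≤ x * y :=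
    pow_add 2 s t ▸ Nat.mul_le_mul (Nat.pow_log_le_self 2 hx) (Nat.pow_log_le_self 2 hy)
  have h2le : f (2 : A) ≤ 2 := by simpa using hf.map_natCast_le 2
  calc f x * f y ≤ f (2 : A) ^ (s + 1) * f (2 : A) ^ (t + 1) := by
        simp only [← Nat.cast_ofNat (R := A) (n := 2), ← hf.map_natCast_pow]
        exact mul_le_mul (hmono (Nat.lt_pow_succ_log_self one_lt_two x).le)
          (hmono (Nat.lt_pow_succ_log_self one_lt_two y).le) (hR _) (hR _)
    _ = f ((2 ^ (s + t) : ℕ) : A) * (f 2 * f 2) := by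
        rw [hf.map_natCast_pow, Nat.cast_ofNat]; ring
    _ ≤ f ((x * y : ℕ) : A) * (2 * 2) :=
        mul_le_mul (hmono hxy) (mul_le_mul h2le h2le (hR _) (hR _)) (hR _) (hR _)
    _ = 4 * f ((x * y : ℕ) : A) := by ring

theorem map_natCast_mul (hf : IsPowMulSeminorm f) (hR : ∀ x : R, 0 ≤ x)
    (htemp : TemperedGrowth R) (h2 : 1 < f 2) (m n : ℕ) :
    f ((m * n : ℕ) : A) = f m * f n := by
  rcases eq_or_ne m 0 with rfl | hm
  · simp [hf.map_zero]
  rcases eq_or_ne n 0 with rfl | hn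
  · simp [hf.map_zero]
  refine le_antisymm (by rw [Nat.cast_mul]; exact hf.map_mul_le _ _) ?_
  have hmn : f ((m * n : ℕ) : A) ≠ 0 :=
    (zero_lt_one.trans_le (hf.one_le_map_natCast hR htemp h2 (mul_ne_zero hm hn))).ne'
  refine htemp.le_of_pow_le_mul_pow hR (P := C 4) (by simp) hmn fun k => ?_
  rw [eval_C, mul_pow, ← hf.map_natCast_pow, ← hf.map_natCast_pow, ← hf.map_natCast_pow, mul_pow]
  exact_mod_cast hf.map_natCast_mul_le_four_mul hR htemp h2 (pow_ne_zero k hm) (pow_ne_zero k hn)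

theorem strictMono_map_natCast (hf : IsPowMulSeminorm f) (hR : ∀ x : R, 0 ≤ x)
    (htemp : TemperedGrowth R) (h2 : 1 < f 2) : StrictMono fun n : ℕ => f n := by
  intro u v huv
  rcases Nat.eq_zero_or_pos u with rfl | hu
  · simpa [hf.map_zero] using
      zero_lt_one.trans_le (hf.one_le_map_natCast hR htemp h2 (by omega : v ≠ 0))
  obtain ⟨k, hk⟩ := Nat.exists_two_mul_pow_le_pow huv
  by_contra! hvu
  have hcancel : f 2 * f u ^ k ≤ f u ^ k :=
    calc f 2 * f u ^ k = f ((2 * u ^ k : ℕ) : A) := by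
          rw [hf.map_natCast_mul hR htemp h2, hf.map_natCast_pow, Nat.cast_ofNat]
      _ ≤ f ((v ^ k : ℕ) : A) := hf.monotone_map_natCast hR htemp h2 hk
      _ ≤ f u ^ k := hf.map_natCast_pow v k ▸ pow_le_pow_left₀ (hR _) hvu k
  exact hcancel.not_gt (lt_mul_of_one_lt_left
    (pow_pos (zero_lt_one.trans_le (hf.one_le_map_natCast hR htemp h2 hu.ne')) k) h2)

theorem map_neg (hf : IsPowMulSeminorm f) (hR : ∀ x : R, 0 ≤ x) (a : A) : f (-a) = f a := by
  have hneg_one : f (-1) = 1 :=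
    (pow_eq_one_iff_of_nonneg (hR _) two_ne_zero).1 (by rw [← hf.map_pow]; simp [hf.map_one])
  have hle (b : A) : f (-b) ≤ f b := by
    simpa [hneg_one] using hf.map_mul_le (-1) b
  exact le_antisymm (hle a) (by simpa using hle (-a))

theorem map_intCast_eq_map_natAbs (hf : IsPowMulSeminorm f) (hR : ∀ x : R, 0 ≤ x) (m : ℤ) :
    f (m : A) = f (m.natAbs : A) := by
  obtain ⟨n, rfl | rfl⟩ := Int.eq_nat_or_neg m <;> simp [hf.map_neg hR]

end IsPowMulSeminorm

end OrderedSemifield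

theorem tempered_powmult_two_gt_one_archimedean_general {A : Type*} [CommRing A]
    {R : Type*} [Semifield R] [LinearOrder R]
    (hadd : ∀ x y z t : R, x ≤ z → y ≤ t → x + y ≤ z + t)
    (hmul : ∀ x y z t : R, x ≤ z → y ≤ t → x * y ≤ z * t)
    (hpos : (0 : R) < 1)
    (htemp : ∀ P : Polynomial ℕ, P ≠ 0 →
      ∀ x : R, (∀ n : ℕ, x ^ n ≤ ((P.eval n : ℕ) : R)) → x ≤ 1)
    (f : A → R)
    (hf0 : f 0 = 0)
    (hfm : ∀ a b : A, f (a * b) ≤ f a * f b)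
    (hfa : ∀ a b : A, f (a + b) ≤ f a + f b)
    (hpm : ∀ (a : A) (n : ℕ), f (a ^ n) = f a ^ n)
    (h2 : 1 < f ((2 : ℤ) : A)) :
    (∀ m n : ℤ, f ((m * n : ℤ) : A) = f ((m : ℤ) : A) * f ((n : ℤ) : A)) ∧
      (∀ m n : ℤ, f ((m : ℤ) : A) ≤ f ((n : ℤ) : A) ↔ |m| ≤ |n|) := by
  have := IsOrderedRing.of_forall_mul_le_mul hadd hmul hpos
  have hR := nonneg_of_forall_mul_le_mul hmul hpos
  have hf : IsPowMulSeminorm f := ⟨hf0, hfm, hfa, hpm⟩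
  replace h2 : 1 < f 2 := by simpa using h2
  refine ⟨fun m n => ?_, fun m n => ?_⟩
  · simp only [hf.map_intCast_eq_map_natAbs hR, Int.natAbs_mul, hf.map_natCast_mul hR htemp h2]
  · simp only [hf.map_intCast_eq_map_natAbs hR, (hf.strictMono_map_natCast hR htemp h2).le_iff_le,
      Int.abs_eq_natAbs, Nat.cast_le]

/-- A tempered power-multiplicative seminorm with `|2| > 1` restricts on the image of `ℤ`
to a multiplicative map multiplicatively equivalent to the archimedean absolute value. -/
theorem tempered_powmult_two_gt_one_archimedean {A : Type*} [CommRing A]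
    {R : Type*} [Semifield R] [LinearOrder R]
    (hadd : ∀ x y z t : R, x ≤ z → y ≤ t → x + y ≤ z + t)
    (hmul : ∀ x y z t : R, x ≤ z → y ≤ t → x * y ≤ z * t)
    (hpos : (0 : R) < 1)
    (htemp : ∀ P : Polynomial ℕ, P ≠ 0 →
      ∀ x : R, (∀ n : ℕ, x ^ n ≤ ((P.eval n : ℕ) : R)) → x ≤ 1)
    (f : A → R)
    (hf0 : f 0 = 0) (hf1 : f 1 = 1)
    (hfm : ∀ a b : A, f (a * b) ≤ f a * f b)
    (hfa : ∀ a b : A, f (a + b) ≤ f a + f b)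
    (hpm : ∀ (a : A) (n : ℕ), f (a ^ n) = f a ^ n)
    (h2 : 1 < f ((2 : ℤ) : A)) :
    (∀ m n : ℤ, f ((m * n : ℤ) : A) = f ((m : ℤ) : A) * f ((n : ℤ) : A)) ∧
      (∀ m n : ℤ, f ((m : ℤ) : A) ≤ f ((n : ℤ) : A) ↔ |m| ≤ |n|) :=
  tempered_powmult_two_gt_one_archimedean_general hadd hmul hpos htemp f hf0 hfm hfa hpm h2
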